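/- arXiv:2506.12497 — 2 statements merged into one kernel-verified Lean document; each statement's English description precedes it below -/
import Mathlib

section
/- Let (X, d) be a pseudometric space, let N be a positive integer, and let ρ ≥ 0 with κ := 4ρ < 1. Let x : ℕ → Fin N → X and c : ℕ → X be such that for every t, the point c(t) minimizes y ↦ (1/N) Σ_{i} d(y, x(t, i)) over X, and for every t and i, d(x(t+1, i), c(t)) ≤ ρ · d(x(t, i), c(t)). Define D(t) := max_{i, j} d(x(t, i), x(t, j)). Then for every t, D(t) ≤ κ^t · D(0); in particular D(t) → 0 as t → ∞. -/
/-!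
Averaging the triangle inequality `d(xᵢ, c) ≤ d(xᵢ, xₖ) + d(c, xₖ)` over `k` and using that the
barycenter `c` does at least as well as the candidate `xᵢ` gives `d(xᵢ, c) ≤ 2D`. After one
contraction step any two points are within `ρ · 2D` of `c`, hence within `4ρD` of each other,
so `D` decays geometrically with ratio `4ρ`.
-/

open Finset

section PairwiseDist

variable {ι X : Type*} [PseudoMetricSpace X]

theorem dist_le_iSup_iSup_dist [Finite ι] (x : ι → X) (i j : ι) :
    dist (x i) (x j) ≤ ⨆ i, ⨆ j, dist (x i) (x j) :=
  le_ciSup_of_le (Finite.bddAbove_range _) i <|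
    le_ciSup_of_le (Finite.bddAbove_range _) j le_rfl

theorem iSup_iSup_dist_nonneg (x : ι → X) : 0 ≤ ⨆ i, ⨆ j, dist (x i) (x j) :=
  Real.iSup_nonneg fun _ ↦ Real.iSup_nonneg fun _ ↦ dist_nonneg

theorem dist_le_two_mul_of_forall_sum_dist_le [Fintype ι] {x : ι → X} {c : X} {D : ℝ}
    (hD : ∀ i j, dist (x i) (x j) ≤ D) (hc : ∀ y, ∑ k, dist c (x k) ≤ ∑ k, dist y (x k))
    (i : ι) : dist (x i) c ≤ 2 * D := by
  have hsum : ∑ _k : ι, dist (x i) c ≤ ∑ _k : ι, 2 * D :=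
    calc ∑ _k : ι, dist (x i) c
        ≤ ∑ k, (dist (x i) (x k) + dist c (x k)) :=
          sum_le_sum fun k _ ↦ dist_triangle_right _ _ _
      _ = ∑ k, dist (x i) (x k) + ∑ k, dist c (x k) := sum_add_distrib
      _ ≤ ∑ k, dist (x i) (x k) + ∑ k, dist (x i) (x k) := add_le_add_right (hc (x i)) _
      _ ≤ ∑ _k : ι, 2 * D := by
          rw [← sum_add_distrib]
          exact sum_le_sum fun k _ ↦ by linarith [hD i k]
  have hcard : (0 : ℝ) < Fintype.card ι := Nat.cast_pos.mpr (Fintype.card_pos_iff.mpr ⟨i⟩)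
  simp only [sum_const, card_univ, nsmul_eq_mul] at hsum
  exact le_of_mul_le_mul_left hsum hcard

theorem iSup_iSup_dist_le_of_contract_toward_barycenter [Fintype ι] {x x' : ι → X} {c : X}
    {ρ : ℝ} (hρ : 0 ≤ ρ) (hc : ∀ y, ∑ k, dist c (x k) ≤ ∑ k, dist y (x k))
    (hx' : ∀ i, dist (x' i) c ≤ ρ * dist (x i) c) :
    ⨆ i, ⨆ j, dist (x' i) (x' j) ≤ 4 * ρ * ⨆ i, ⨆ j, dist (x i) (x j) := by
  set D := ⨆ i, ⨆ j, dist (x i) (x j)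
  have hcenter := dist_le_two_mul_of_forall_sum_dist_le (dist_le_iSup_iSup_dist x) hc
  have hD : 0 ≤ D := iSup_iSup_dist_nonneg x
  refine Real.iSup_le (fun i ↦ Real.iSup_le (fun j ↦ ?_) (by positivity)) (by positivity)
  calc dist (x' i) (x' j)
      ≤ dist (x' i) c + dist (x' j) c := dist_triangle_right _ _ _
    _ ≤ ρ * dist (x i) c + ρ * dist (x j) c := add_le_add (hx' i) (hx' j)
    _ ≤ ρ * (2 * D) + ρ * (2 * D) := by gcongr <;> exact hcenter _
    _ = 4 * ρ * D := by ring

end PairwiseDist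

/-- Self-contained version of the paper's Theorem 1: if each `c t` is an exact barycenter
(minimizer of the average distance to the `x t i`) and each update contracts toward `c t`
with factor `ρ`, with `κ := 4ρ < 1`, then the maximal pairwise discrepancy
`D t := max_{i,j} d(x t i, x t j)` satisfies `D t ≤ κ^t * D 0` and tends to `0`. -/
theorem wbc_convergence_with_exact_barycenters {X : Type*} [PseudoMetricSpace X]
    {N : ℕ} (hN : 0 < N) (ρ : ℝ) (hρ : 0 ≤ ρ) (hκ : 4 * ρ < 1)
    (x : ℕ → Fin N → X) (c : ℕ → X)
    (hbary : ∀ t, ∀ y : X,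
      (1 / (N : ℝ)) * ∑ i, dist (c t) (x t i) ≤ (1 / (N : ℝ)) * ∑ i, dist y (x t i))
    (hcontract : ∀ t i, dist (x (t + 1) i) (c t) ≤ ρ * dist (x t i) (c t))
    (D : ℕ → ℝ)
    (hD : ∀ t, D t = ⨆ i : Fin N, ⨆ j : Fin N, dist (x t i) (x t j)) :
    (∀ t, D t ≤ (4 * ρ) ^ t * D 0) ∧
      Filter.Tendsto D Filter.atTop (nhds 0) := by
  have hsum : ∀ t y, ∑ i, dist (c t) (x t i) ≤ ∑ i, dist y (x t i) := fun t y ↦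
    le_of_mul_le_mul_left (hbary t y) (one_div_pos.mpr (Nat.cast_pos.mpr hN))
  have hstep : ∀ t, D (t + 1) ≤ 4 * ρ * D t := fun t ↦ by
    simpa only [hD] using
      iSup_iSup_dist_le_of_contract_toward_barycenter hρ (hsum t) (hcontract t)
  have hgeom : ∀ t, D t ≤ (4 * ρ) ^ t * D 0 := fun t ↦
    le_geom (by positivity) t fun k _ ↦ hstep k
  have hnonneg : ∀ t, 0 ≤ D t := fun t ↦ by rw [hD]; exact iSup_iSup_dist_nonneg (x t)
  refine ⟨hgeom, squeeze_zero hnonneg hgeom ?_⟩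
  simpa using (tendsto_pow_atTop_nhds_zero_of_lt_one (by positivity) hκ).mul_const (D 0)
end

section
/- Let (X, d) be a pseudometric space, let L ≥ 0, γ ≥ 0, ε ≥ 0, λ > 0, and let F, F̂ : X → ℝ both be L-Lipschitz with respect to d. Let S ⊆ X be a γ-net of X (for every x ∈ X there exists s ∈ S with d(x, s) ≤ γ) with |F̂(s) − F(s)| ≤ ε for every s ∈ S. Suppose x* ∈ X satisfies F(x) ≥ F(x*) + λ · d(x, x*) for every x ∈ X, and x̂ ∈ X satisfies F̂(x̂) ≤ F̂(x*). Then d(x̂, x*) ≤ 2(2Lγ + ε) / λ. -/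
/-! Transferring the net deviation to every point costs `2Lγ` by the Lipschitz bounds, so
`|F̂ - F| ≤ δ := 2Lγ + ε` on all of `X`. Then `λ d(x̂, x*) ≤ F x̂ - F x* ≤ F̂ x̂ - F̂ x* + 2δ ≤ 2δ`. -/

section

variable {X : Type*} [PseudoMetricSpace X]

theorem abs_sub_le_of_net {F G : X → ℝ} {L₁ L₂ γ ε : ℝ} (hL₁ : 0 ≤ L₁) (hL₂ : 0 ≤ L₂)
    (hF : ∀ x y, |F x - F y| ≤ L₁ * dist x y) (hG : ∀ x y, |G x - G y| ≤ L₂ * dist x y)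
    {S : Set X} (hnet : ∀ x, ∃ s ∈ S, dist x s ≤ γ) (hdev : ∀ s ∈ S, |G s - F s| ≤ ε)
    (x : X) : |G x - F x| ≤ (L₁ + L₂) * γ + ε := by
  obtain ⟨s, hs, hxs⟩ := hnet x
  have hGs : |G x - G s| ≤ L₂ * γ := (hG x s).trans (mul_le_mul_of_nonneg_left hxs hL₂)
  have hFs : |F s - F x| ≤ L₁ * γ :=
    (hF s x).trans (mul_le_mul_of_nonneg_left (dist_comm s x ▸ hxs) hL₁)
  calc |G x - F x| ≤ |G x - G s| + |G s - F s| + |F s - F x| :=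
        (abs_sub_le _ (F s) _).trans (add_le_add_left (abs_sub_le _ (G s) _) _)
    _ ≤ L₂ * γ + ε + L₁ * γ := add_le_add (add_le_add hGs (hdev s hs)) hFs
    _ = (L₁ + L₂) * γ + ε := by ring

theorem dist_le_of_linear_growth_of_abs_sub_le {F G : X → ℝ} {lam δ : ℝ} (hlam : 0 < lam)
    {x₀ x : X} (hgrowth : F x₀ + lam * dist x x₀ ≤ F x) (hx : |G x - F x| ≤ δ)
    (hx₀ : |G x₀ - F x₀| ≤ δ) (hmin : G x ≤ G x₀) : dist x x₀ ≤ 2 * δ / lam := by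
  rw [le_div_iff₀ hlam]
  rw [abs_le] at hx hx₀
  linarith [hx.1, hx₀.2]

end

theorem net_deviation_barycenter_stability_general {X : Type*} [PseudoMetricSpace X]
    (L γ ε lam : ℝ) (hL : 0 ≤ L) (hlam : 0 < lam)
    (F Fhat : X → ℝ)
    (hF : ∀ x y : X, |F x - F y| ≤ L * dist x y)
    (hFhat : ∀ x y : X, |Fhat x - Fhat y| ≤ L * dist x y)
    (S : Set X) (hnet : ∀ x : X, ∃ s ∈ S, dist x s ≤ γ)
    (hdev : ∀ s ∈ S, |Fhat s - F s| ≤ ε)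
    (xstar : X) (hgrowth : ∀ x : X, F xstar + lam * dist x xstar ≤ F x)
    (xhat : X) (hmin : Fhat xhat ≤ Fhat xstar) :
    dist xhat xstar ≤ 2 * (2 * L * γ + ε) / lam := by
  have hdev_everywhere (x : X) : |Fhat x - F x| ≤ 2 * L * γ + ε := by
    simpa only [← two_mul] using abs_sub_le_of_net hL hL hF hFhat hnet hdev x
  exact dist_le_of_linear_growth_of_abs_sub_le hlam (hgrowth xhat) (hdev_everywhere xhat)
    (hdev_everywhere xstar) hmin

/-- Combination of Steps 2 and 3 in the proof of the paper's Theorem 2: with `F, Fhat`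
both `L`-Lipschitz, `S` a `γ`-net on which `|Fhat − F| ≤ ε`, `xstar` a point around which
`F` grows linearly with rate `lam`, and `Fhat xhat ≤ Fhat xstar`, one gets
`d(xhat, xstar) ≤ 2(2Lγ + ε)/lam`. -/
theorem net_deviation_barycenter_stability {X : Type*} [PseudoMetricSpace X]
    (L γ ε lam : ℝ) (hL : 0 ≤ L) (hγ : 0 ≤ γ) (hε : 0 ≤ ε) (hlam : 0 < lam)
    (F Fhat : X → ℝ)
    (hF : ∀ x y : X, |F x - F y| ≤ L * dist x y)
    (hFhat : ∀ x y : X, |Fhat x - Fhat y| ≤ L * dist x y)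
    (S : Set X) (hnet : ∀ x : X, ∃ s ∈ S, dist x s ≤ γ)
    (hdev : ∀ s ∈ S, |Fhat s - F s| ≤ ε)
    (xstar : X) (hgrowth : ∀ x : X, F xstar + lam * dist x xstar ≤ F x)
    (xhat : X) (hmin : Fhat xhat ≤ Fhat xstar) :
    dist xhat xstar ≤ 2 * (2 * L * γ + ε) / lam :=
  net_deviation_barycenter_stability_general L γ ε lam hL hlam F Fhat hF hFhat S hnet hdev xstar
    hgrowth xhat hmin
end
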